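/- Let G = (A, W, Ω) be a McNaughton game and let X ⊆ V be such that A(X) is a subarena and X ∩ W ∈ Ω. Then Player 0 fully wins G(X) if and only if for every Y ⊊ X such that A(Y) is a subarena that is a 0-trap in G(X), Player 0 fully wins G(Y). -/

import Mathlib

open Set

/-- An arena: a finite directed bipartite graph where every vertex has an
outgoing edge.  The vertex set is `V0 ∪ V1` inside the finite type `α`. -/
structure Arena (α : Type) [Fintype α] where
  V0 : Set α
  V1 : Set α
  E : Set (α × α)
  disj : Disjoint V0 V1
  bipartite : E ⊆ (V0 ×ˢ V1) ∪ (V1 ×ˢ V0)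
  succ : ∀ v ∈ V0 ∪ V1, ∃ u, (v, u) ∈ E

variable {α : Type} [Fintype α]

/-- The set of positions of the arena. -/
def Arena.V (A : Arena α) : Set α := A.V0 ∪ A.V1

/-- The positions of Player σ (σ ∈ {0,1}). -/
def Arena.P (A : Arena α) (σ : Fin 2) : Set α := if σ = 0 then A.V0 else A.V1

/-- `A(X)` is a subarena: `X ⊆ V` and every vertex of `X` has an
outgoing edge inside `X`. -/
def Subarena (A : Arena α) (X : Set α) : Prop :=
  X ⊆ A.V ∧ ∀ v ∈ X, ∃ u ∈ X, (v, u) ∈ A.E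

/-- `A(Y)` is a σ-trap of the pseudo-arena `A(X)`: every vertex of
`Y ∩ V_{1-σ}` has an `E`-successor in `Y`, and every vertex of `Y ∩ V_σ`
has all of its `E`-successors inside `X` lying in `Y`.
A σ-trap of `A` itself is `TrapIn A A.V σ Y`. -/
def TrapIn (A : Arena α) (X : Set α) (σ : Fin 2) (Y : Set α) : Prop :=
  Y ⊆ X ∧
  (∀ v ∈ Y ∩ A.P (1 - σ), ∃ u ∈ Y, (v, u) ∈ A.E) ∧
  (∀ v ∈ Y ∩ A.P σ, ∀ u, (v, u) ∈ A.E → u ∈ X → u ∈ Y)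

/-- A play of the (pseudo-)arena `A(X)`: an infinite `E`-path staying in `X`. -/
def IsPlayIn (A : Arena α) (X : Set α) (ρ : ℕ → α) : Prop :=
  ∀ i, ρ i ∈ X ∧ (ρ i, ρ (i + 1)) ∈ A.E

/-- The set of vertices occurring infinitely often in the play `ρ`. -/
def InfOcc (ρ : ℕ → α) : Set α := {v | {i | ρ i = v}.Infinite}

/-- A strategy for Player σ in the game played on the pseudo-arena `A(X)`:
it maps a history (the finite prefix before the current vertex) and the
current vertex of `V_σ ∩ X` to an `E`-successor inside `X`. -/
structure StrategyIn (A : Arena α) (X : Set α) (σ : Fin 2) where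
  move : List α → α → α
  legal : ∀ h v, v ∈ X ∩ A.P σ → (v, move h v) ∈ A.E ∧ move h v ∈ X

/-- A play is consistent with a strategy for Player σ if every move from a
vertex of `V_σ` follows the strategy. -/
def ConsistentIn {A : Arena α} {X : Set α} {σ : Fin 2} (s : StrategyIn A X σ)
    (ρ : ℕ → α) : Prop :=
  ∀ i, ρ i ∈ A.P σ → ρ (i + 1) = s.move (List.ofFn fun j : Fin i => ρ j) (ρ i)

/-- Player σ wins the game on `A(X)` (with payoff `payoff` describing the
plays won by Player 0) from position `v`. -/
def WinsFrom (A : Arena α) (X : Set α) (payoff : (ℕ → α) → Prop) (σ : Fin 2)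
    (v : α) : Prop :=
  ∃ s : StrategyIn A X σ, ∀ ρ, IsPlayIn A X ρ → ρ 0 = v → ConsistentIn s ρ →
    (if σ = 0 then payoff ρ else ¬ payoff ρ)

/-- `Win_σ` of the game on `A(X)`. -/
def WinSet (A : Arena α) (X : Set α) (payoff : (ℕ → α) → Prop) (σ : Fin 2) :
    Set α :=
  {v ∈ X | WinsFrom A X payoff σ v}

/-- Player σ fully wins the game on `A(X)`. -/
def FullyWins (A : Arena α) (X : Set α) (payoff : (ℕ → α) → Prop)
    (σ : Fin 2) : Prop :=
  ∀ v ∈ X, WinsFrom A X payoff σ v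

/-- The attractor `Attr_σ(T, A(X))`: the least `W ⊇ T` containing every
`u ∈ X ∩ V_σ` with some `E`-successor in `W ∩ X` and every
`u ∈ X ∩ V_{1-σ}` all of whose `E`-successors inside `X` lie in `W`. -/
def AttrIn (A : Arena α) (X : Set α) (σ : Fin 2) (T : Set α) : Set α :=
  ⋂₀ {W | T ⊆ W ∧
    (∀ u ∈ X ∩ A.P σ, (∃ w ∈ W ∩ X, (u, w) ∈ A.E) → u ∈ W) ∧
    (∀ u ∈ X ∩ A.P (1 - σ), (∀ w, (u, w) ∈ A.E → w ∈ X → w ∈ W) → u ∈ W)}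

/-- The Müller winning condition: Player 0 wins the play `ρ` iff `Inf(ρ) ∈ Ω`. -/
def MullerPayoff (Ω : Set (Set α)) : (ℕ → α) → Prop := fun ρ => InfOcc ρ ∈ Ω

/-- The McNaughton winning condition: Player 0 wins `ρ` iff `Inf(ρ) ∩ W ∈ Ω`. -/
def McNaughtonPayoff (W : Set α) (Ω : Set (Set α)) : (ℕ → α) → Prop :=
  fun ρ => InfOcc ρ ∩ W ∈ Ω

/-!
Only the backward direction needs an argument. Player 0 lists the vertices of `X` as targets
`c₀, c₁, …` so that each vertex recurs infinitely often. While aiming at `c = cₛ`, the complement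
`X \ Attr₀({c})` is a proper 0-trap of `A(X)`, hence won by Player 0: inside it she plays that
winning strategy (started afresh at the beginning of the stage), and inside the attractor she
forces the play to `c`. Since the trap can only be left into the attractor, every stage either ends
by visiting `c` or stays in the trap from its start on. If the stages advance forever, every vertex
of `X` occurs infinitely often and `Inf(ρ) ∩ W = X ∩ W ∈ Ω`. Otherwise a suffix of the play is a
winning play of the trap game, and the winning condition only depends on `Inf(ρ)`.
-/

open Filter

namespace Arena

variable (A : Arena α)

lemma mem_V_of_mem_E {v u : α} (h : (v, u) ∈ A.E) : v ∈ A.V := by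
  rcases A.bipartite h with h | h
  · exact Or.inl h.1
  · exact Or.inr h.1

lemma mem_P_or_mem_P_one_sub {v : α} (hv : v ∈ A.V) (σ : Fin 2) :
    v ∈ A.P σ ∨ v ∈ A.P (1 - σ) := by
  fin_cases σ <;> simpa [Arena.P, Arena.V, or_comm] using hv

lemma disjoint_P_one_sub (σ : Fin 2) : Disjoint (A.P σ) (A.P (1 - σ)) := by
  fin_cases σ
  · simpa [Arena.P] using A.disj
  · simpa [Arena.P] using A.disj.symm

end Arena

lemma TrapIn.subarena {A : Arena α} {X Y : Set α} {σ : Fin 2} (hX : Subarena A X)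
    (hY : TrapIn A X σ Y) : Subarena A Y := by
  refine ⟨hY.1.trans hX.1, fun v hv => ?_⟩
  rcases A.mem_P_or_mem_P_one_sub (hX.1 (hY.1 hv)) σ with hσ | hσ
  · obtain ⟨u, huX, hu⟩ := hX.2 v (hY.1 hv)
    exact ⟨u, hY.2.2 v ⟨hv, hσ⟩ u hu huX, hu⟩
  · exact hY.2.1 v ⟨hv, hσ⟩

lemma WinsFrom.of_trapIn {A : Arena α} {X Y : Set α} {pay : (ℕ → α) → Prop} {σ : Fin 2}
    {v : α} (hY : TrapIn A X σ Y) (h : WinsFrom A X pay σ v) : WinsFrom A Y pay σ v := by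
  obtain ⟨s, hs⟩ := h
  refine ⟨⟨s.move, fun l u hu => ?_⟩, fun ρ hρ h0 hcons =>
    hs ρ (fun i => ⟨hY.1 (hρ i).1, (hρ i).2⟩) h0 hcons⟩
  obtain ⟨hE, huX⟩ := s.legal l u ⟨hY.1 hu.1, hu.2⟩
  exact ⟨hE, hY.2.2 u hu _ hE huX⟩

lemma FullyWins.exists_strategy {A : Arena α} {X : Set α} {pay : (ℕ → α) → Prop} {σ : Fin 2}
    (h : FullyWins A X pay σ) :
    ∃ s : StrategyIn A X σ, ∀ ρ, IsPlayIn A X ρ → ConsistentIn s ρ →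
      if σ = 0 then pay ρ else ¬ pay ρ := by
  classical
  choose str hstr using h
  refine ⟨⟨fun l v => if hu : l.headD v ∈ X then (str _ hu).move l v
    else if hv : v ∈ X then (str v hv).move l v else v, fun l v hv => ?_⟩, fun ρ hρ hcons => ?_⟩
  · split_ifs with hu
    · exact (str _ hu).legal l v hv
    · exact (str v hv.1).legal l v hv
    · exact absurd hv.1 ‹_›
  · refine hstr (ρ 0) (hρ 0).1 ρ hρ rfl fun i hi => ?_
    have hhead : (List.ofFn fun j : Fin i => ρ j).headD (ρ i) = ρ 0 := by cases i <;> simp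
    rw [hcons i hi]
    simp only [hhead, (hρ 0).1, dite_true]

section Attractor

variable (A : Arena α) (X : Set α) (σ : Fin 2) (T : Set α)

def attrLevel : ℕ → Set α
  | 0 => ∅
  | n + 1 => T ∪ {v | v ∈ X ∩ A.P σ ∧ ∃ u ∈ X, (v, u) ∈ A.E ∧ u ∈ attrLevel n}
      ∪ {v | v ∈ X ∩ A.P (1 - σ) ∧ ∀ u ∈ X, (v, u) ∈ A.E → u ∈ attrLevel n}

def attr : Set α := ⋃ n, attrLevel A X σ T n

noncomputable def attrRank (v : α) : ℕ := sInf {n | v ∈ attrLevel A X σ T n}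

open Classical in
noncomputable def attrMove (v : α) : α :=
  if h : ∃ u ∈ X, (v, u) ∈ A.E ∧ u ∈ attr A X σ T ∧
      attrRank A X σ T u < attrRank A X σ T v then h.choose
  else if h : ∃ u ∈ X, (v, u) ∈ A.E then h.choose else v

variable {A X σ T}

lemma attrLevel_mono : Monotone (attrLevel A X σ T) := by
  refine monotone_nat_of_le_succ fun n => ?_
  induction n with
  | zero => exact empty_subset _
  | succ n ih =>
    rintro v ((hT | ⟨hv, u, huX, hu, hun⟩) | ⟨hv, hall⟩)
    · exact .inl (.inl hT)
    · exact .inl (.inr ⟨hv, u, huX, hu, ih hun⟩)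
    · exact .inr ⟨hv, fun u huX hu => ih (hall u huX hu)⟩

lemma mem_attr_of_mem_attrLevel {v : α} {n : ℕ} (hv : v ∈ attrLevel A X σ T n) :
    v ∈ attr A X σ T :=
  mem_iUnion.2 ⟨n, hv⟩

lemma subset_attr : T ⊆ attr A X σ T :=
  fun _ hv => mem_attr_of_mem_attrLevel (n := 1) (.inl (.inl hv))

lemma mem_attrLevel_attrRank {v : α} (hv : v ∈ attr A X σ T) :
    v ∈ attrLevel A X σ T (attrRank A X σ T v) :=
  Nat.sInf_mem (mem_iUnion.1 hv)

lemma attrRank_le {v : α} {n : ℕ} (hv : v ∈ attrLevel A X σ T n) : attrRank A X σ T v ≤ n :=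
  Nat.sInf_le hv

lemma exists_attrRank_eq_succ {v : α} (hv : v ∈ attr A X σ T) (hvT : v ∉ T) :
    ∃ n, attrRank A X σ T v = n + 1 ∧
      ((v ∈ X ∩ A.P σ ∧ ∃ u ∈ X, (v, u) ∈ A.E ∧ u ∈ attrLevel A X σ T n) ∨
        (v ∈ X ∩ A.P (1 - σ) ∧ ∀ u ∈ X, (v, u) ∈ A.E → u ∈ attrLevel A X σ T n)) := by
  have h := mem_attrLevel_attrRank hv
  obtain ⟨n, hn⟩ := Nat.exists_eq_succ_of_ne_zero (n := attrRank A X σ T v) fun h0 => by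
    simp [h0, attrLevel] at h
  rw [hn] at h
  rcases h with (hT | h) | h
  · exact absurd hT hvT
  · exact ⟨n, hn, .inl h⟩
  · exact ⟨n, hn, .inr h⟩

lemma exists_attrRank_lt_of_mem_P {v : α} (hv : v ∈ attr A X σ T) (hvT : v ∉ T)
    (hσ : v ∈ A.P σ) :
    ∃ u ∈ X, (v, u) ∈ A.E ∧ u ∈ attr A X σ T ∧ attrRank A X σ T u < attrRank A X σ T v := by
  obtain ⟨n, hn, ⟨-, u, huX, hu, hun⟩ | ⟨⟨-, hσ'⟩, -⟩⟩ := exists_attrRank_eq_succ hv hvT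
  · exact ⟨u, huX, hu, mem_attr_of_mem_attrLevel hun, hn ▸ Nat.lt_succ_of_le (attrRank_le hun)⟩
  · exact absurd hσ' (disjoint_left.1 (A.disjoint_P_one_sub σ) hσ)

lemma attrRank_lt_of_mem_P_one_sub {v u : α} (hv : v ∈ attr A X σ T) (hvT : v ∉ T)
    (hσ : v ∈ A.P (1 - σ)) (huX : u ∈ X) (hu : (v, u) ∈ A.E) :
    u ∈ attr A X σ T ∧ attrRank A X σ T u < attrRank A X σ T v := by
  obtain ⟨n, hn, ⟨⟨-, hσ'⟩, -⟩ | ⟨-, hall⟩⟩ := exists_attrRank_eq_succ hv hvT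
  · exact absurd hσ (disjoint_left.1 (A.disjoint_P_one_sub σ) hσ')
  · exact ⟨mem_attr_of_mem_attrLevel (hall u huX hu),
      hn ▸ Nat.lt_succ_of_le (attrRank_le (hall u huX hu))⟩

lemma attrMove_mem (hX : Subarena A X) {v : α} (hv : v ∈ X) :
    (v, attrMove A X σ T v) ∈ A.E ∧ attrMove A X σ T v ∈ X := by
  unfold attrMove
  split_ifs with h h'
  · exact ⟨h.choose_spec.2.1, h.choose_spec.1⟩
  · exact ⟨h'.choose_spec.2, h'.choose_spec.1⟩
  · exact absurd (hX.2 v hv) h'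

lemma attrMove_attrRank_lt {v : α} (hv : v ∈ attr A X σ T) (hvT : v ∉ T) (hσ : v ∈ A.P σ) :
    attrMove A X σ T v ∈ attr A X σ T ∧
      attrRank A X σ T (attrMove A X σ T v) < attrRank A X σ T v := by
  have h := exists_attrRank_lt_of_mem_P hv hvT hσ
  rw [attrMove, dif_pos h]
  exact h.choose_spec.2.2

lemma trapIn_diff_attr : TrapIn A X σ (X \ attr A X σ T) := by
  refine ⟨sdiff_subset, ?_, ?_⟩
  · rintro v ⟨⟨hvX, hvA⟩, hσ⟩
    by_contra! hall
    obtain ⟨M, hM⟩ := (toFinite (attrRank A X σ T '' {u | u ∈ X ∧ (v, u) ∈ A.E})).bddAbove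
    refine hvA (mem_attr_of_mem_attrLevel (n := M + 1) (.inr ⟨⟨hvX, hσ⟩, fun u huX hu => ?_⟩))
    have huA : u ∈ attr A X σ T := by_contra fun h => hall u ⟨huX, h⟩ hu
    exact attrLevel_mono (hM ⟨u, ⟨huX, hu⟩, rfl⟩) (mem_attrLevel_attrRank huA)
  · rintro v ⟨⟨hvX, hvA⟩, hσ⟩ u hu huX
    refine ⟨huX, fun huA => hvA ?_⟩
    exact mem_attr_of_mem_attrLevel (n := attrRank A X σ T u + 1)
      (.inl (.inr ⟨⟨hvX, hσ⟩, u, huX, hu, mem_attrLevel_attrRank huA⟩))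

lemma diff_attr_ssubset {c : α} (hc : c ∈ X) : X \ attr A X σ {c} ⊂ X :=
  sdiff_ssubset_left_iff.2 ⟨c, hc, subset_attr rfl⟩

/-- The attractor rank strictly decreases along such a play, so it cannot stay in the attractor. -/
lemma notMem_attr_of_forall_ge {ρ : ℕ → α} {N : ℕ} (hρ : IsPlayIn A X ρ)
    (hT : ∀ n ≥ N, ρ n ∉ T)
    (hmove : ∀ n ≥ N, ρ n ∈ attr A X σ T → ρ n ∈ A.P σ → ρ (n + 1) = attrMove A X σ T (ρ n)) :
    ∀ n ≥ N, ρ n ∉ attr A X σ T := by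
  have hstep : ∀ n ≥ N, ρ n ∈ attr A X σ T →
      ρ (n + 1) ∈ attr A X σ T ∧ attrRank A X σ T (ρ (n + 1)) < attrRank A X σ T (ρ n) := by
    intro n hn hA
    rcases A.mem_P_or_mem_P_one_sub (A.mem_V_of_mem_E (hρ n).2) σ with hσ | hσ
    · rw [hmove n hn hA hσ]
      exact attrMove_attrRank_lt hA (hT n hn) hσ
    · exact attrRank_lt_of_mem_P_one_sub hA (hT n hn) hσ (hρ (n + 1)).1 (hρ n).2
  intro n hn hA
  have hdesc : ∀ j, ρ (n + j) ∈ attr A X σ T ∧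
      attrRank A X σ T (ρ (n + j)) + j ≤ attrRank A X σ T (ρ n) := by
    intro j
    induction j with
    | zero => exact ⟨hA, le_rfl⟩
    | succ j ih =>
      rw [← Nat.add_assoc]
      obtain ⟨h1, h2⟩ := hstep (n + j) (by omega) ih.1
      exact ⟨h1, by have := ih.2; omega⟩
  have := (hdesc (attrRank A X σ T (ρ n) + 1)).2
  omega

end Attractor

section PlayMemory

omit [Fintype α]

lemma mem_infOcc_iff {ρ : ℕ → α} {v : α} : v ∈ InfOcc ρ ↔ ∃ᶠ n in atTop, ρ n = v :=
  Nat.frequently_atTop_iff_infinite.symm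

lemma infOcc_shift (ρ : ℕ → α) (N : ℕ) : InfOcc (fun j => ρ (N + j)) = InfOcc ρ := by
  ext v
  simp_rw [mem_infOcc_iff, Nat.add_comm N]
  conv_rhs => rw [← map_add_atTop_eq_nat N]
  rw [frequently_map]

lemma exists_frequently_eq (β : Type*) [Nonempty β] [Countable β] :
    ∃ f : ℕ → β, ∀ b, ∃ᶠ n in atTop, f n = b := by
  obtain ⟨g, hg⟩ := exists_surjective_nat β
  refine ⟨fun n => g n.unpair.1, fun b => frequently_atTop.2 fun m => ?_⟩
  obtain ⟨k, rfl⟩ := hg b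
  exact ⟨Nat.pair k m, Nat.right_le_pair k m, by simp⟩

variable (tf : ℕ → α)

open Classical in
noncomputable def stageStep (m : ℕ × List α) (x : α) : ℕ × List α :=
  if x = tf m.1 then (m.1 + 1, []) else (m.1, m.2 ++ [x])

/-- The memory of the cyclic strategy: the number of targets `tf 0, tf 1, …` reached so far (the
stage), and the vertices seen since the current stage began. -/
noncomputable def memory (l : List α) : ℕ × List α := l.foldl (stageStep tf) (0, [])

noncomputable def playMemory (ρ : ℕ → α) (n : ℕ) : ℕ × List α :=
  memory tf (List.ofFn fun j : Fin n => ρ j)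

variable {tf} {ρ : ℕ → α}

lemma playMemory_zero : playMemory tf ρ 0 = (0, []) := rfl

lemma playMemory_succ (n : ℕ) :
    playMemory tf ρ (n + 1) = stageStep tf (playMemory tf ρ n) (ρ n) := by
  rw [playMemory, List.ofFn_succ', List.concat_eq_append, memory, List.foldl_concat]
  rfl


lemma playMemory_succ_of_eq {n : ℕ} (h : ρ n = tf (playMemory tf ρ n).1) :
    playMemory tf ρ (n + 1) = ((playMemory tf ρ n).1 + 1, []) := by
  rw [playMemory_succ, stageStep, if_pos h]

lemma playMemory_succ_of_ne {n : ℕ} (h : ρ n ≠ tf (playMemory tf ρ n).1) :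
    playMemory tf ρ (n + 1) = ((playMemory tf ρ n).1, (playMemory tf ρ n).2 ++ [ρ n]) := by
  rw [playMemory_succ, stageStep, if_neg h]

lemma stage_le_stage_succ (n : ℕ) : (playMemory tf ρ n).1 ≤ (playMemory tf ρ (n + 1)).1 := by
  by_cases h : ρ n = tf (playMemory tf ρ n).1
  · simp [playMemory_succ_of_eq h]
  · simp [playMemory_succ_of_ne h]

lemma stage_le_self (n : ℕ) : (playMemory tf ρ n).1 ≤ n := by
  induction n with
  | zero => simp [playMemory_zero]
  | succ n ih =>
    by_cases h : ρ n = tf (playMemory tf ρ n).1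
    · simpa [playMemory_succ_of_eq h] using ih
    · simpa [playMemory_succ_of_ne h] using ih.trans n.le_succ

/-- The stage only advances past `j` by visiting the `j`-th target. -/
lemma exists_visit_of_lt_stage {j n : ℕ} (hj : j < (playMemory tf ρ n).1) :
    ∃ m ≥ j, ρ m = tf j := by
  induction n with
  | zero => simp [playMemory_zero] at hj
  | succ n ih =>
    by_cases h : ρ n = tf (playMemory tf ρ n).1
    · rw [playMemory_succ_of_eq h] at hj
      rcases Nat.lt_succ_iff_lt_or_eq.1 hj with hj | rfl
      · exact ih hj
      · exact ⟨n, stage_le_self n, h⟩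
    · rw [playMemory_succ_of_ne h] at hj
      exact ih hj

lemma exists_stable_stage (hbdd : ∃ B, ∀ n, (playMemory tf ρ n).1 ≤ B) :
    ∃ N, (∀ n ≥ N, (playMemory tf ρ n).1 = (playMemory tf ρ N).1) ∧
      (playMemory tf ρ N).2 = [] := by
  classical
  obtain ⟨B, hB⟩ := hbdd
  have hex : ∃ N, ∀ n ≥ N, (playMemory tf ρ n).1 = (playMemory tf ρ N).1 := by
    have hbdd : BddAbove (range fun n => (playMemory tf ρ n).1) :=
      ⟨B, by rintro _ ⟨n, rfl⟩; exact hB n⟩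
    obtain ⟨N, hN⟩ := Nat.sSup_mem (range_nonempty _) hbdd
    refine ⟨N, fun n hn => le_antisymm ?_
      (monotone_nat_of_le_succ stage_le_stage_succ hn)⟩
    exact (le_csSup hbdd ⟨n, rfl⟩).trans_eq hN.symm
  refine ⟨Nat.find hex, Nat.find_spec hex, ?_⟩
  rcases hN : Nat.find hex with _ | k
  · rfl
  · by_contra hrun
    have hk : ρ k ≠ tf (playMemory tf ρ k).1 := fun h => hrun (by rw [playMemory_succ_of_eq h])
    refine Nat.find_min hex (m := k) (by omega) fun n hn => ?_
    rcases hn.eq_or_lt with rfl | hlt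
    · rfl
    · have := Nat.find_spec hex n (by omega)
      rwa [hN, playMemory_succ_of_ne hk] at this

lemma ne_target_of_stable_stage {N : ℕ}
    (hN : ∀ n ≥ N, (playMemory tf ρ n).1 = (playMemory tf ρ N).1)
    {n : ℕ} (hn : N ≤ n) : ρ n ≠ tf (playMemory tf ρ n).1 := fun h => by
  have := hN (n + 1) (by omega)
  rw [playMemory_succ_of_eq h, hN n hn] at this
  omega

lemma run_eq_ofFn_of_stable_stage {N : ℕ}
    (hN : ∀ n ≥ N, (playMemory tf ρ n).1 = (playMemory tf ρ N).1)
    (hrun : (playMemory tf ρ N).2 = []) (j : ℕ) :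
    (playMemory tf ρ (N + j)).2 = List.ofFn fun i : Fin j => ρ (N + i) := by
  induction j with
  | zero => exact hrun
  | succ j ih =>
    rw [← Nat.add_assoc, playMemory_succ_of_ne (ne_target_of_stable_stage hN (by omega)), ih,
      List.ofFn_succ', List.concat_eq_append]
    rfl

lemma mem_infOcc_of_stage_unbounded {tf : ℕ → α} {ρ : ℕ → α}
    (hub : ∀ B, ∃ n, B < (playMemory tf ρ n).1) {c : α} (hc : ∃ᶠ j in atTop, tf j = c) :
    c ∈ InfOcc ρ := by
  refine mem_infOcc_iff.2 (frequently_atTop.2 fun m => ?_)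
  obtain ⟨j, hjm, rfl⟩ := frequently_atTop.1 hc m
  obtain ⟨n, hn⟩ := hub j
  obtain ⟨k, hjk, hk⟩ := exists_visit_of_lt_stage hn
  exact ⟨k, hjm.trans hjk, hk⟩

end PlayMemory

lemma infOcc_subset {A : Arena α} {X : Set α} {ρ : ℕ → α} (hρ : IsPlayIn A X ρ) :
    InfOcc ρ ⊆ X := fun _ hv =>
  let ⟨i, hi⟩ := (show {i | ρ i = _}.Infinite from hv).nonempty
  hi ▸ (hρ i).1

section Cyclic

variable {A : Arena α} {X : Set α} {tf : ℕ → α}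

open Classical in
noncomputable def cyclicStrategy (hX : Subarena A X)
    (S : ∀ s, StrategyIn A (X \ attr A X 0 {tf s}) 0) : StrategyIn A X 0 where
  move l v :=
    if v ∈ X \ attr A X 0 {tf (memory tf l).1} then (S (memory tf l).1).move (memory tf l).2 v
      else attrMove A X 0 {tf (memory tf l).1} v
  legal l v hv := by
    split_ifs with hY
    · exact ⟨((S _).legal _ v ⟨hY, hv.2⟩).1, ((S _).legal _ v ⟨hY, hv.2⟩).2.1⟩
    · exact attrMove_mem hX hv.1

variable {hX : Subarena A X} {S : ∀ s, StrategyIn A (X \ attr A X 0 {tf s}) 0} {ρ : ℕ → α}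

open Classical in
lemma ConsistentIn.cyclicStrategy_move (hcons : ConsistentIn (cyclicStrategy hX S) ρ) {n : ℕ}
    (h0 : ρ n ∈ A.P 0) :
    ρ (n + 1) = if ρ n ∈ X \ attr A X 0 {tf (playMemory tf ρ n).1} then
        (S (playMemory tf ρ n).1).move (playMemory tf ρ n).2 (ρ n)
      else attrMove A X 0 {tf (playMemory tf ρ n).1} (ρ n) :=
  hcons n h0

lemma mullerPayoff_of_stable_stage {F : Set (Set α)}
    (hS : ∀ s ρ, IsPlayIn A (X \ attr A X 0 {tf s}) ρ → ConsistentIn (S s) ρ → MullerPayoff F ρ)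
    (hρ : IsPlayIn A X ρ) (hcons : ConsistentIn (cyclicStrategy hX S) ρ) {N : ℕ}
    (hN : ∀ n ≥ N, (playMemory tf ρ n).1 = (playMemory tf ρ N).1)
    (hrun : (playMemory tf ρ N).2 = []) :
    MullerPayoff F ρ := by
  classical
  set s := (playMemory tf ρ N).1
  have hmove : ∀ n ≥ N, ρ n ∈ A.P 0 → ρ (n + 1) = if ρ n ∈ X \ attr A X 0 {tf s} then
      (S s).move (playMemory tf ρ n).2 (ρ n) else attrMove A X 0 {tf s} (ρ n) := by
    intro n hn h0
    have := hcons.cyclicStrategy_move h0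
    rwa [hN n hn] at this
  have hY : ∀ n ≥ N, ρ n ∈ X \ attr A X 0 {tf s} := fun n hn =>
    ⟨(hρ n).1, notMem_attr_of_forall_ge hρ
      (fun n hn => by simpa [← hN n hn] using ne_target_of_stable_stage hN hn)
      (fun n hn hA h0 => by rw [hmove n hn h0, if_neg fun h => h.2 hA]) n hn⟩
  have hplay : IsPlayIn A (X \ attr A X 0 {tf s}) fun j => ρ (N + j) :=
    fun j => ⟨hY (N + j) (by omega), (hρ (N + j)).2⟩
  have hcons' : ConsistentIn (S s) fun j => ρ (N + j) := fun j h0 => by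
    show ρ (N + j + 1) = (S s).move (List.ofFn fun i : Fin j => ρ (N + i)) (ρ (N + j))
    rw [← run_eq_ofFn_of_stable_stage hN hrun j, hmove (N + j) (by omega) h0,
      if_pos (hY _ (by omega))]
  simpa only [MullerPayoff, infOcc_shift] using hS s _ hplay hcons'

end Cyclic

theorem fullyWins_muller_of_forall_trapIn {A : Arena α} {X : Set α} {F : Set (Set α)}
    (hX : Subarena A X) (hXF : X ∈ F)
    (h : ∀ Y, Y ⊂ X → Subarena A Y → TrapIn A X 0 Y → FullyWins A Y (MullerPayoff F) 0) :
    FullyWins A X (MullerPayoff F) 0 := by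
  intro v hv
  have : Nonempty X := ⟨⟨v, hv⟩⟩
  obtain ⟨e, he⟩ := exists_frequently_eq X
  have hwin (s : ℕ) : ∃ S : StrategyIn A (X \ attr A X 0 {(e s : α)}) 0,
      ∀ ρ, IsPlayIn A (X \ attr A X 0 {(e s : α)}) ρ → ConsistentIn S ρ → MullerPayoff F ρ := by
    have hY : TrapIn A X 0 (X \ attr A X 0 {(e s : α)}) := trapIn_diff_attr
    simpa using (h _ (diff_attr_ssubset (e s).2) (hY.subarena hX) hY).exists_strategy
  choose S hS using hwin
  refine ⟨cyclicStrategy hX S, fun ρ hρ _ hcons => ?_⟩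
  rw [if_pos rfl]
  by_cases hbdd : ∃ B, ∀ n, (playMemory (fun s => (e s : α)) ρ n).1 ≤ B
  · obtain ⟨N, hN, hrun⟩ := exists_stable_stage hbdd
    exact mullerPayoff_of_stable_stage hS hρ hcons hN hrun
  · push Not at hbdd
    have hInf : InfOcc ρ = X := (infOcc_subset hρ).antisymm fun c hc =>
      mem_infOcc_of_stage_unbounded hbdd ((he ⟨c, hc⟩).mono fun n hn => by rw [hn])
    rwa [MullerPayoff, hInf]

theorem stmt18_general (A : Arena α) (W : Set α) (Ω : Set (Set α))
    (X : Set α) (hX : Subarena A X) (hmem : X ∩ W ∈ Ω) :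
    FullyWins A X (McNaughtonPayoff W Ω) 0 ↔
      ∀ Y, Y ⊂ X → Subarena A Y → TrapIn A X 0 Y →
        FullyWins A Y (McNaughtonPayoff W Ω) 0 :=
  ⟨fun h _ hYX _ hY v hv => (h v (hYX.subset hv)).of_trapIn hY,
    fullyWins_muller_of_forall_trapIn (F := {S | S ∩ W ∈ Ω}) hX hmem⟩

/-- for a McNaughton game `G = (A, W, Ω)` and a subarena `A(X)`
with `X ∩ W ∈ Ω`, Player 0 fully wins `G(X)` iff Player 0 fully wins `G(Y)`
for every proper subarena `A(Y)` that is a 0-trap in `G(X)`. -/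
theorem stmt18 (A : Arena α) (W : Set α) (Ω : Set (Set α))
    (hW : W ⊆ A.V) (hΩ : ∀ S ∈ Ω, S ⊆ W)
    (X : Set α) (hX : Subarena A X) (hmem : X ∩ W ∈ Ω) :
    FullyWins A X (McNaughtonPayoff W Ω) 0 ↔
      ∀ Y, Y ⊂ X → Subarena A Y → TrapIn A X 0 Y →
        FullyWins A Y (McNaughtonPayoff W Ω) 0 :=
  stmt18_general A W Ω X hX hmem
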